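/- arXiv:2305.07503 — 3 statements merged into one kernel-verified Lean document; each statement's English description precedes it below -/
import Mathlib

section
/- Let n ≥ 1 be a natural number and let a > n be a real number. Then there exist constants 0 < c ≤ C (depending only on n and a) such that for every ρ > 0 and every r ∈ (0, ρ], c·r^{n−a} ≤ ∫_{B_ρ(0) ∩ {z : z_n > 0}} |z + r e_n|^{−a} dz ≤ C·r^{n−a}. -/
open MeasureTheory

/-!
Substituting `z = r • y` maps the half-ball of radius `ρ` to the half-ball of radius `ρ / r` and
pulls out the factor `r ^ (n - a)`, so the integral equals `r ^ (n - a) * J (ρ / r)` with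
`J t = ∫_{B_t ∩ {⟪y, e⟫ > 0}} ‖y + e‖ ^ (-a) dy` (`halfBallIntegral`). Since `ρ / r ≥ 1`, monotonicity of `J` gives
`J 1 ≤ J (ρ / r) ≤ J ∞`; the upper bound is finite because `‖y + e‖ ≥ (1 + ‖y‖) / √2` on the
half-space and `a > n`.
-/

open Metric Set Module RealInnerProductSpace Pointwise

section HalfSpace

variable {E : Type*} [NormedAddCommGroup E] [InnerProductSpace ℝ E]

def posHalfSpace (e : E) : Set E := {y | 0 < ⟪y, e⟫}

theorem isOpen_posHalfSpace (e : E) : IsOpen (posHalfSpace e) :=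
  isOpen_lt continuous_const (continuous_id.inner continuous_const)

theorem smul_posHalfSpace {r : ℝ} (hr : 0 < r) (e : E) : r • posHalfSpace e = posHalfSpace e := by
  ext z
  rw [mem_smul_set_iff_inv_smul_mem₀ hr.ne']
  simp only [posHalfSpace, mem_ofPred_eq, inner_smul_left, RCLike.conj_to_real]
  exact mul_pos_iff_of_pos_left (inv_pos.mpr hr)

theorem one_add_sq_norm_le_sq_norm_add {e y : E} (he : ‖e‖ = 1) (hy : y ∈ posHalfSpace e) :
    1 + ‖y‖ ^ 2 ≤ ‖y + e‖ ^ 2 := by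
  have hy : 0 < ⟪y, e⟫ := hy
  nlinarith [norm_add_sq_real y e]

theorem norm_add_rpow_neg_le {e y : E} (he : ‖e‖ = 1) (hy : y ∈ posHalfSpace e) {a : ℝ}
    (ha : 0 ≤ a) : ‖y + e‖ ^ (-a) ≤ √2 ^ a * (1 + ‖y‖) ^ (-a) := by
  have hlow : (1 + ‖y‖) / √2 ≤ ‖y + e‖ := by
    rw [div_le_iff₀ (by positivity)]
    refine (pow_le_pow_iff_left₀ (by positivity) (by positivity) two_ne_zero).mp ?_
    rw [mul_pow, Real.sq_sqrt zero_le_two]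
    nlinarith [one_add_sq_norm_le_sq_norm_add he hy, sq_nonneg (1 - ‖y‖)]
  calc ‖y + e‖ ^ (-a) ≤ ((1 + ‖y‖) / √2) ^ (-a) :=
        Real.rpow_le_rpow_of_nonpos (by positivity) hlow (neg_nonpos.mpr ha)
    _ = √2 ^ a * (1 + ‖y‖) ^ (-a) := by
        rw [Real.div_rpow (by positivity) (Real.sqrt_nonneg 2), Real.rpow_neg (Real.sqrt_nonneg 2),
          div_inv_eq_mul, mul_comm]

end HalfSpace

section HalfBallIntegral

noncomputable def halfBallIntegral {E : Type*} [NormedAddCommGroup E] [InnerProductSpace ℝ E]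
    [MeasurableSpace E] (μ : Measure E) (e : E) (a t : ℝ) : ℝ :=
  ∫ y in ball 0 t ∩ posHalfSpace e, ‖y + e‖ ^ (-a) ∂μ

variable {E : Type*} [NormedAddCommGroup E] [InnerProductSpace ℝ E] [FiniteDimensional ℝ E]
  [MeasurableSpace E] [BorelSpace E] (μ : Measure E) [μ.IsAddHaarMeasure]

theorem integrableOn_posHalfSpace_norm_add_rpow_neg {e : E} (he : ‖e‖ = 1) {a : ℝ}
    (ha : (finrank ℝ E : ℝ) < a) :
    IntegrableOn (fun y ↦ ‖y + e‖ ^ (-a)) (posHalfSpace e) μ := by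
  have hmajor : Integrable (fun y : E ↦ √2 ^ a * (1 + ‖y‖) ^ (-a)) μ :=
    (integrable_one_add_norm ha).const_mul _
  have hmeas : Measurable fun y : E ↦ ‖y + e‖ ^ (-a) := by fun_prop
  refine hmajor.integrableOn.mono' hmeas.aestronglyMeasurable ?_
  filter_upwards [ae_restrict_mem (isOpen_posHalfSpace e).measurableSet] with y hy
  rw [Real.norm_of_nonneg (by positivity)]
  exact norm_add_rpow_neg_le he hy ((Nat.cast_nonneg _).trans ha.le)

theorem halfBallIntegral_mono {e : E} (he : ‖e‖ = 1) {a : ℝ} (ha : (finrank ℝ E : ℝ) < a) :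
    Monotone (halfBallIntegral μ e a) := fun _ _ hst ↦
  setIntegral_mono_set
    ((integrableOn_posHalfSpace_norm_add_rpow_neg μ he ha).mono_set inter_subset_right)
    (.of_forall fun _ ↦ by positivity)
    (inter_subset_inter_left _ (ball_subset_ball hst)).eventuallyLE

theorem halfBallIntegral_le_integral_posHalfSpace {e : E} (he : ‖e‖ = 1) {a : ℝ}
    (ha : (finrank ℝ E : ℝ) < a) (t : ℝ) :
    halfBallIntegral μ e a t ≤ ∫ y in posHalfSpace e, ‖y + e‖ ^ (-a) ∂μ :=
  setIntegral_mono_set (integrableOn_posHalfSpace_norm_add_rpow_neg μ he ha)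
    (.of_forall fun _ ↦ by positivity) inter_subset_right.eventuallyLE

theorem halfBallIntegral_pos {e : E} (he : ‖e‖ = 1) {a : ℝ} (ha : (finrank ℝ E : ℝ) < a)
    {t : ℝ} (ht : 0 < t) : 0 < halfBallIntegral μ e a t := by
  have hopen : IsOpen (ball (0 : E) t ∩ posHalfSpace e) := isOpen_ball.inter (isOpen_posHalfSpace e)
  have hmem : (min t 1 / 2) • e ∈ ball (0 : E) t ∩ posHalfSpace e := by
    refine ⟨?_, ?_⟩
    · rw [mem_ball_zero_iff, norm_smul, he, mul_one, Real.norm_of_nonneg (by positivity)]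
      linarith [min_le_left t 1, lt_min ht one_pos]
    · show 0 < ⟪(min t 1 / 2) • e, e⟫
      rw [real_inner_smul_left, real_inner_self_eq_norm_sq, he]
      positivity
  have hsupp : ball (0 : E) t ∩ posHalfSpace e ⊆ Function.support fun y ↦ ‖y + e‖ ^ (-a) := by
    intro y hy
    have hone : 1 ≤ ‖y + e‖ := by
      nlinarith [one_add_sq_norm_le_sq_norm_add he hy.2, norm_nonneg (y + e)]
    exact (Real.rpow_pos_of_pos (one_pos.trans_le hone) _).ne'
  rw [halfBallIntegral, setIntegral_pos_iff_support_of_nonneg_ae (.of_forall fun _ ↦ by positivity)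
    ((integrableOn_posHalfSpace_norm_add_rpow_neg μ he ha).mono_set inter_subset_right)]
  exact (hopen.measure_pos μ ⟨_, hmem⟩).trans_le (measure_mono fun y hy ↦ ⟨hsupp hy, hy⟩)

theorem integral_halfBall_eq_rpow_mul_halfBallIntegral (e : E) (a ρ : ℝ) {r : ℝ} (hr : 0 < r) :
    ∫ z in ball 0 ρ ∩ posHalfSpace e, ‖z + r • e‖ ^ (-a) ∂μ =
      r ^ ((finrank ℝ E : ℝ) - a) * halfBallIntegral μ e a (ρ / r) := by
  have hset : r • (ball (0 : E) (ρ / r) ∩ posHalfSpace e) = ball 0 ρ ∩ posHalfSpace e := by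
    rw [smul_set_inter₀ hr.ne', smul_posHalfSpace hr, _root_.smul_ball hr.ne', smul_zero,
      Real.norm_of_nonneg hr.le, mul_div_cancel₀ _ hr.ne']
  have hsubst := Measure.setIntegral_comp_smul_of_pos μ (fun z ↦ ‖z + r • e‖ ^ (-a))
    (ball 0 (ρ / r) ∩ posHalfSpace e) hr
  have hscale : ∀ y : E, ‖r • y + r • e‖ ^ (-a) = r ^ (-a) * ‖y + e‖ ^ (-a) := fun y ↦ by
    rw [← smul_add, norm_smul, Real.norm_of_nonneg hr.le, Real.mul_rpow hr.le (norm_nonneg _)]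
  simp only [hscale, integral_const_mul, hset, smul_eq_mul] at hsubst
  rw [eq_inv_mul_iff_mul_eq₀ (by positivity)] at hsubst
  rw [← hsubst, halfBallIntegral, ← mul_assoc, Real.rpow_sub hr, Real.rpow_natCast,
    Real.rpow_neg hr.le, ← div_eq_mul_inv]

theorem exists_bounds_integral_halfBall_norm_add_smul_rpow_neg {e : E} (he : ‖e‖ = 1) {a : ℝ}
    (ha : (finrank ℝ E : ℝ) < a) :
    ∃ c C : ℝ, 0 < c ∧ c ≤ C ∧ ∀ ρ r : ℝ, 0 < r → r ≤ ρ →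
      c * r ^ ((finrank ℝ E : ℝ) - a) ≤
          ∫ z in ball 0 ρ ∩ posHalfSpace e, ‖z + r • e‖ ^ (-a) ∂μ ∧
        ∫ z in ball 0 ρ ∩ posHalfSpace e, ‖z + r • e‖ ^ (-a) ∂μ ≤
          C * r ^ ((finrank ℝ E : ℝ) - a) := by
  refine ⟨halfBallIntegral μ e a 1, ∫ y in posHalfSpace e, ‖y + e‖ ^ (-a) ∂μ,
    halfBallIntegral_pos μ he ha one_pos, halfBallIntegral_le_integral_posHalfSpace μ he ha 1,
    fun ρ r hr hrρ ↦ ?_⟩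
  have hpow : 0 ≤ r ^ ((finrank ℝ E : ℝ) - a) := by positivity
  rw [integral_halfBall_eq_rpow_mul_halfBallIntegral μ e a ρ hr]
  constructor
  · rw [mul_comm]
    exact mul_le_mul_of_nonneg_left (halfBallIntegral_mono μ he ha ((one_le_div hr).mpr hrρ)) hpow
  · rw [mul_comm _ (r ^ _)]
    exact mul_le_mul_of_nonneg_left (halfBallIntegral_le_integral_posHalfSpace μ he ha _) hpow

end HalfBallIntegral

theorem posHalfSpace_euclideanSpace_single {n : ℕ} (i : Fin n) :
    posHalfSpace (EuclideanSpace.single i (1 : ℝ)) = {z : EuclideanSpace ℝ (Fin n) | 0 < z i} := by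
  ext z
  simp [posHalfSpace, EuclideanSpace.inner_single_right]

/-- Two-sided estimate for the integral of `|z + r e_n|^{-a}` over the upper half-ball:
for `a > n` there are `0 < c ≤ C` (depending only on `n, a`) with
`c r^{n-a} ≤ ∫_{B_ρ(0) ∩ {z_n > 0}} |z + r e_n|^{-a} dz ≤ C r^{n-a}` for all
`0 < r ≤ ρ`. -/
theorem stmt_1 (n : ℕ) (hn : 1 ≤ n) (a : ℝ) (ha : (n : ℝ) < a) :
    ∃ c C : ℝ, 0 < c ∧ c ≤ C ∧ ∀ ρ r : ℝ, 0 < ρ → 0 < r → r ≤ ρ →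
      c * r ^ ((n : ℝ) - a) ≤
        (∫ z in Metric.ball (0 : EuclideanSpace ℝ (Fin n)) ρ ∩
            {z : EuclideanSpace ℝ (Fin n) | 0 < z ⟨n - 1, by omega⟩},
          ‖z + r • EuclideanSpace.single (⟨n - 1, by omega⟩ : Fin n) (1 : ℝ)‖ ^ (-a)) ∧
      (∫ z in Metric.ball (0 : EuclideanSpace ℝ (Fin n)) ρ ∩
            {z : EuclideanSpace ℝ (Fin n) | 0 < z ⟨n - 1, by omega⟩},
          ‖z + r • EuclideanSpace.single (⟨n - 1, by omega⟩ : Fin n) (1 : ℝ)‖ ^ (-a)) ≤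
        C * r ^ ((n : ℝ) - a) := by
  have he : ‖EuclideanSpace.single (⟨n - 1, by omega⟩ : Fin n) (1 : ℝ)‖ = 1 := by simp
  obtain ⟨c, C, hc, hcC, hbounds⟩ := exists_bounds_integral_halfBall_norm_add_smul_rpow_neg
    volume he (a := a) (by rwa [finrank_euclideanSpace_fin])
  refine ⟨c, C, hc, hcC, fun ρ r _ hr hrρ ↦ ?_⟩
  simpa only [posHalfSpace_euclideanSpace_single, finrank_euclideanSpace_fin] using
    hbounds ρ r hr hrρ
end

section
/- For every r₁ > 0 and every r ∈ (0, r₁), the quantity τ_r := ln((12r₁ − 2r)/(12r₁ − 3r)) / ln((6r₁ − r)/(2r₁)) satisfies τ_r ≥ r / (12 r₁ ln 3); in particular τ_r / r ≥ 1 / (12 r₁ ln 3). -/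
/-! The numerator is `log x` with `x > 1`, bounded below via `log x ≥ 1 - 1/x`, which gives
`r / (12 r₁ - 2 r) ≥ r / (12 r₁)`. The denominator is `log y` with `1 < y ≤ 3` for `0 < r < r₁`,
so it lies in `(0, log 3]`. -/

namespace Real

lemma sub_div_le_log_div {a b : ℝ} (ha : 0 < a) (hb : 0 < b) : (a - b) / a ≤ log (a / b) := by
  have h := one_sub_inv_le_log_of_pos (div_pos ha hb)
  rwa [inv_div, one_sub_div ha.ne'] at h

lemma div_le_log_sub_div_sub {a r : ℝ} (hr : 0 < r) (hra : 3 * r < a) :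
    r / a ≤ log ((a - 2 * r) / (a - 3 * r)) :=
  calc r / a ≤ r / (a - 2 * r) := div_le_div_of_nonneg_left hr.le (by linarith) (by linarith)
    _ = (a - 2 * r - (a - 3 * r)) / (a - 2 * r) := by ring_nf
    _ ≤ log ((a - 2 * r) / (a - 3 * r)) := sub_div_le_log_div (by linarith) (by linarith)

lemma log_six_mul_sub_div_two_mul_mem_Ioc {r₁ r : ℝ} (hr0 : 0 < r) (hr1 : r < r₁) :
    log ((6 * r₁ - r) / (2 * r₁)) ∈ Set.Ioc 0 (log 3) := by
  have h2r₁ : 0 < 2 * r₁ := by linarith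
  refine ⟨log_pos ?_, log_le_log (div_pos (by linarith) h2r₁) ?_⟩
  · rw [lt_div_iff₀ h2r₁]; linarith
  · rw [div_le_iff₀ h2r₁]; linarith

end Real

open Real in
theorem stmt_5_general (r₁ r : ℝ) (hr0 : 0 < r) (hr1 : r < r₁) :
    r / (12 * r₁ * Real.log 3) ≤
      Real.log ((12 * r₁ - 2 * r) / (12 * r₁ - 3 * r)) /
        Real.log ((6 * r₁ - r) / (2 * r₁)) ∧
    1 / (12 * r₁ * Real.log 3) ≤
      (Real.log ((12 * r₁ - 2 * r) / (12 * r₁ - 3 * r)) /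
        Real.log ((6 * r₁ - r) / (2 * r₁))) / r := by
  obtain ⟨hden_pos, hden_le⟩ := log_six_mul_sub_div_two_mul_mem_Ioc hr0 hr1
  have hnum : r / (12 * r₁) ≤ log ((12 * r₁ - 2 * r) / (12 * r₁ - 3 * r)) :=
    div_le_log_sub_div_sub hr0 (by linarith)
  have hτ : r / (12 * r₁ * log 3) ≤
      log ((12 * r₁ - 2 * r) / (12 * r₁ - 3 * r)) / log ((6 * r₁ - r) / (2 * r₁)) := by
    rw [← div_div]
    exact div_le_div₀ ((div_nonneg hr0.le (by linarith)).trans hnum) hnum hden_pos hden_le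
  refine ⟨hτ, ?_⟩
  calc 1 / (12 * r₁ * log 3) = r / (12 * r₁ * log 3) / r := by field_simp
    _ ≤ _ := div_le_div_of_nonneg_right hτ hr0.le

/-- For `0 < r < r₁`, the quantity
`τ_r = ln((12r₁ - 2r)/(12r₁ - 3r)) / ln((6r₁ - r)/(2r₁))` satisfies
`τ_r ≥ r/(12 r₁ ln 3)`; in particular `τ_r / r ≥ 1/(12 r₁ ln 3)`. -/
theorem stmt_5 (r₁ r : ℝ) (h1 : 0 < r₁) (hr0 : 0 < r) (hr1 : r < r₁) :
    r / (12 * r₁ * Real.log 3) ≤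
      Real.log ((12 * r₁ - 2 * r) / (12 * r₁ - 3 * r)) /
        Real.log ((6 * r₁ - r) / (2 * r₁)) ∧
    1 / (12 * r₁ * Real.log 3) ≤
      (Real.log ((12 * r₁ - 2 * r) / (12 * r₁ - 3 * r)) /
        Real.log ((6 * r₁ - r) / (2 * r₁))) / r :=
  stmt_5_general r₁ r hr0 hr1
end

section
/- For η > 0, define ω_η : [0,∞) → ℝ by ω_η(0) = 0, ω_η(t) = 2^η e^{−2} (log(1/t))^{−η} for t ∈ (0, e^{−2}), and ω_η(t) = e^{−2} for t ≥ e^{−2}. Then for every η > 0, every β ∈ (0, 1) and every t > 0, one has ω_η(t/β) ≤ (1 − (log β)/2)^η · ω_η(t). -/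
/-- The logarithmic modulus of continuity `ω_η` of the paper: `ω_η(t) = 0` for `t ≤ 0`,
`ω_η(t) = 2^η e^{-2} (log(1/t))^{-η}` for `0 < t < e^{-2}`, and `ω_η(t) = e^{-2}`
for `t ≥ e^{-2}`. -/
noncomputable def omegaEta (η t : ℝ) : ℝ :=
  if t ≤ 0 then 0
  else if t < Real.exp (-2) then (2 : ℝ) ^ η * Real.exp (-2) * Real.log (1 / t) ^ (-η)
  else Real.exp (-2)

/-- Scaling property: for `η > 0`, `β ∈ (0,1)` and `t > 0`,
`ω_η(t/β) ≤ (1 - (log β)/2)^η ω_η(t)`, i.e. `ω_η(t/β) ≤ |log(e β^{-1/2})|^η ω_η(t)`. -/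
theorem stmt_7 (η β t : ℝ) (hη : 0 < η) (hβ0 : 0 < β) (hβ1 : β < 1) (ht : 0 < t) :
    omegaEta η (t / β) ≤ (1 - Real.log β / 2) ^ η * omegaEta η t := by
  have hc : (0:ℝ) < Real.exp (-2) := Real.exp_pos _
  have hs : 0 < -Real.log β := by
    have := Real.log_neg hβ0 hβ1; linarith
  set s := -Real.log β with hsdef
  have hfac : 1 - Real.log β / 2 = (2 + s) / 2 := by rw [hsdef]; ring
  have htβ : 0 < t / β := div_pos ht hβ0
  unfold omegaEta
  rw [if_neg (not_le.2 htβ), if_neg (not_le.2 ht), hfac]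
  by_cases h1 : t / β < Real.exp (-2)
  · have ht2 : t < Real.exp (-2) := by
      have h : t < t / β := by
        rw [lt_div_iff₀ hβ0]; nlinarith
      linarith
    rw [if_pos h1, if_pos ht2]
    have hlog : Real.log (1 / (t / β)) = (-Real.log t) - s := by
      rw [one_div, Real.log_inv, Real.log_div (ne_of_gt ht) (ne_of_gt hβ0)]
      rw [hsdef]; ring
    have hlog2 : Real.log (1 / t) = -Real.log t := by
      rw [one_div, Real.log_inv]
    set l := -Real.log t with hl
    have hls : 2 < l - s := by
      have h2 : Real.log (t / β) < Real.log (Real.exp (-2)) := Real.log_lt_log htβ h1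
      rw [Real.log_exp, Real.log_div (ne_of_gt ht) (ne_of_gt hβ0)] at h2
      rw [hl, hsdef]; linarith
    have hlpos : 0 < l := by linarith
    rw [hlog, hlog2]
    have key : ((l - s)⁻¹) ^ η ≤ ((2 + s) / (2 * l)) ^ η := by
      apply Real.rpow_le_rpow (by positivity) _ hη.le
      rw [inv_eq_one_div, div_le_div_iff₀ (by linarith) (by positivity)]
      nlinarith
    calc (2:ℝ) ^ η * Real.exp (-2) * (l - s) ^ (-η)
        = 2 ^ η * Real.exp (-2) * ((l - s)⁻¹) ^ η := by
          rw [Real.rpow_neg (by linarith), ← Real.inv_rpow (by linarith)]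
      _ ≤ 2 ^ η * Real.exp (-2) * ((2 + s) / (2 * l)) ^ η := by
          apply mul_le_mul_of_nonneg_left key (by positivity)
      _ = ((2 + s) / 2) ^ η * (2 ^ η * Real.exp (-2) * l ^ (-η)) := by
          rw [Real.rpow_neg hlpos.le, ← Real.inv_rpow hlpos.le,
            show (2 + s) / (2 * l) = ((2 + s) / 2) * l⁻¹ by field_simp,
            Real.mul_rpow (by positivity) (by positivity)]
          ring
  · rw [if_neg h1]
    have hl2 : -Real.log t ≤ 2 + s := by
      have h2 : Real.log (Real.exp (-2)) ≤ Real.log (t / β) :=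
        Real.log_le_log hc (not_lt.1 h1)
      rw [Real.log_exp, Real.log_div (ne_of_gt ht) (ne_of_gt hβ0)] at h2
      rw [hsdef]; linarith
    by_cases ht2 : t < Real.exp (-2)
    · rw [if_pos ht2]
      have hlog2 : Real.log (1 / t) = -Real.log t := by rw [one_div, Real.log_inv]
      rw [hlog2]
      set l := -Real.log t with hl
      have hlpos : 0 < l := by
        have := Real.log_lt_log ht ht2
        rw [Real.log_exp] at this
        rw [hl]; linarith
      have e1 : ((2 + s) / 2) ^ η * (2 ^ η * Real.exp (-2) * l ^ (-η))
          = ((2 + s) / l) ^ η * Real.exp (-2) := by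
        rw [Real.rpow_neg hlpos.le, ← Real.inv_rpow hlpos.le,
          show (2 + s) / l = ((2 + s) / 2) * 2 * l⁻¹ by field_simp,
          Real.mul_rpow (by positivity) (by positivity),
          Real.mul_rpow (by positivity) (by positivity)]
        ring
      rw [e1]
      have : (1:ℝ) ≤ ((2 + s) / l) ^ η := by
        calc (1:ℝ) = 1 ^ η := (Real.one_rpow η).symm
          _ ≤ ((2 + s) / l) ^ η := by
              apply Real.rpow_le_rpow zero_le_one _ hη.le
              rw [le_div_iff₀ hlpos]; linarith
      nlinarith
    · rw [if_neg ht2]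
      have : (1:ℝ) ≤ ((2 + s) / 2) ^ η := by
        calc (1:ℝ) = 1 ^ η := (Real.one_rpow η).symm
          _ ≤ ((2 + s) / 2) ^ η := by
              apply Real.rpow_le_rpow zero_le_one (by linarith) hη.le
      nlinarith
end
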